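/- arXiv:1907.12102 — 2 statements merged into one kernel-verified Lean document; each statement's English description precedes it below -/
import Mathlib

section
/- Let A : D(A) → H be self-adjoint and B : D(B) → H symmetric with D(A) ⊆ D(B), and suppose ‖Bx‖ ≤ a‖Ax‖ + b‖x‖ for all x ∈ D(A) with a < 1 and b < ∞. Then A + B with domain D(A) is self-adjoint (Kato–Rellich). -/
open scoped ComplexInnerProductSpace

/-- The operator `A + B` defined on `D(A)` (with `D(A) ⊆ D(B)`). -/
noncomputable def katoSum {H : Type*} [NormedAddCommGroup H] [InnerProductSpace ℂ H]
    (A B : H →ₗ.[ℂ] H) (hdom : A.domain ≤ B.domain) : H →ₗ.[ℂ] H :=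
  ⟨A.domain, A.toFun + B.toFun.comp (Submodule.inclusion hdom)⟩

namespace KRaux

open LinearPMap

variable {H : Type*} [NormedAddCommGroup H] [InnerProductSpace ℂ H]

/-- Norm identity for symmetric operators and purely imaginary shifts. -/
lemma norm_sq_shift {T : H →ₗ.[ℂ] H}
    (hsymm : ∀ x y : T.domain, ⟪T x, (y : H)⟫ = ⟪(x : H), T y⟫)
    {c : ℂ} (hc : c.re = 0) (x : T.domain) :
    ‖T x + c • (x : H)‖ ^ 2 = ‖T x‖ ^ 2 + ‖c‖ ^ 2 * ‖(x : H)‖ ^ 2 := by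
  have hreal : (starRingEnd ℂ) ⟪T x, (x : H)⟫ = ⟪T x, (x : H)⟫ := by
    rw [inner_conj_symm, hsymm]
  have him : (⟪T x, (x : H)⟫).im = 0 := by
    have := congrArg Complex.im hreal
    simpa [Complex.conj_im] using by linarith [congrArg Complex.im hreal, Complex.conj_im ⟪T x, (x : H)⟫]
  have h := @norm_add_sq ℂ _ _ _ _ (T x) (c • (x : H))
  rw [inner_smul_right] at h
  have hre : (c * ⟪T x, (x : H)⟫).re = 0 := by
    rw [Complex.mul_re, hc, him]; ring
  rw [h, norm_smul]
  simp only [RCLike.re_to_complex, hre]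
  ring

end KRaux

namespace KRaux
open LinearPMap
variable {H : Type*} [NormedAddCommGroup H] [InnerProductSpace ℂ H] [CompleteSpace H]

lemma mem_of_forall_inner {A : H →ₗ.[ℂ] H} (hdense : Dense (A.domain : Set H))
    (hA : A† = A) {x v : H} (h : ∀ u : A.domain, ⟪v, (u : H)⟫ = ⟪x, A u⟫) :
    (x, v) ∈ A.graph := by
  have hx : x ∈ A†.domain := mem_adjoint_domain_of_exists x ⟨v, h⟩
  have hval : A† ⟨x, hx⟩ = v := adjoint_apply_eq hdense _ h
  have hx' : x ∈ A.domain := hA ▸ hx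
  have : A ⟨x, hx'⟩ = v := by
    have hle : A† ≤ A := le_of_eq hA
    rw [← hval]
    exact (hle.2 (x := ⟨x, hx⟩) (y := ⟨x, hx'⟩) rfl).symm
  rw [mem_graph_iff]
  exact ⟨⟨x, hx'⟩, rfl, this⟩

lemma graph_closed {A : H →ₗ.[ℂ] H} (hdense : Dense (A.domain : Set H))
    (hA : A† = A) : IsClosed (A.graph : Set (H × H)) := by
  have hsymm : ∀ x y : A.domain, ⟪A x, (y : H)⟫ = ⟪(x : H), A y⟫ := by
    have h := adjoint_isFormalAdjoint hdense (T := A)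
    rw [hA] at h
    exact h
  have hset : (A.graph : Set (H × H)) =
      ⋂ u : A.domain, {p : H × H | ⟪p.2, (u : H)⟫ = ⟪p.1, A u⟫} := by
    ext p
    simp only [Set.mem_iInter, Set.mem_setOf_eq, SetLike.mem_coe]
    constructor
    · intro hp u
      rw [mem_graph_iff] at hp
      obtain ⟨y, h1, h2⟩ := hp
      rw [← h1, ← h2]
      exact hsymm y u
    · intro hp
      exact mem_of_forall_inner hdense hA hp
  rw [hset]
  refine isClosed_iInter fun u => ?_
  exact isClosed_eq (continuous_snd.inner continuous_const)
    (continuous_fst.inner continuous_const)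

end KRaux

namespace KRaux
open LinearPMap
variable {H : Type*} [NormedAddCommGroup H] [InnerProductSpace ℂ H] [CompleteSpace H]

lemma conj_eq_neg {c : ℂ} (hc : c.re = 0) : (starRingEnd ℂ) c = -c := by
  apply Complex.ext <;> simp [hc]

lemma surj_shift {A : H →ₗ.[ℂ] H} (hdense : Dense (A.domain : Set H)) (hA : A† = A)
    {c : ℂ} (hc : c.re = 0) (hc0 : c ≠ 0) (w : H) :
    ∃ x : A.domain, A x + c • (x : H) = w := by
  have hsymm : ∀ x y : A.domain, ⟪A x, (y : H)⟫ = ⟪(x : H), A y⟫ := by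
    have h := adjoint_isFormalAdjoint hdense (T := A)
    rw [hA] at h
    exact h
  set g : A.domain →ₗ[ℂ] H := A.toFun + c • A.domain.subtype with hg
  have hgapp : ∀ x : A.domain, g x = A x + c • (x : H) := fun x => rfl
  have hsq : ∀ x : A.domain, ‖g x‖ ^ 2 = ‖A x‖ ^ 2 + ‖c‖ ^ 2 * ‖(x : H)‖ ^ 2 := by
    intro x
    rw [hgapp]
    exact norm_sq_shift hsymm hc x
  have hge1 : ∀ x : A.domain, ‖A x‖ ≤ ‖g x‖ := by
    intro x
    nlinarith [hsq x, norm_nonneg (g x), norm_nonneg (A x), norm_nonneg (x : H),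
      sq_nonneg (‖c‖ * ‖(x : H)‖), mul_pow ‖c‖ ‖(x : H)‖ 2]
  have hge2 : ∀ x : A.domain, ‖c‖ * ‖(x : H)‖ ≤ ‖g x‖ := by
    intro x
    nlinarith [hsq x, norm_nonneg (g x), norm_nonneg (A x), norm_nonneg (x : H),
      norm_nonneg c, mul_nonneg (norm_nonneg c) (norm_nonneg (x : H)),
      mul_pow ‖c‖ ‖(x : H)‖ 2]
  set M : Submodule ℂ H := LinearMap.range g with hM
  -- M is closed
  have hGclosed : IsClosed (A.graph : Set (H × H)) := graph_closed hdense hA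
  have : CompleteSpace A.graph := hGclosed.completeSpace_coe
  set ψ : H × H →L[ℂ] H :=
    ContinuousLinearMap.snd ℂ H H + c • ContinuousLinearMap.fst ℂ H H with hψ
  have hψapp : ∀ p : H × H, ψ p = p.2 + c • p.1 := fun p => rfl
  set f : A.graph → H := fun p => ψ (p : H × H) with hf
  have huc : UniformContinuous f := ψ.uniformContinuous.comp uniformContinuous_subtype_val
  have hψg : ∀ r : H × H, r ∈ A.graph → ‖r.1‖ ≤ ‖c‖⁻¹ * ‖ψ r‖ ∧ ‖r.2‖ ≤ ‖ψ r‖ := by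
    intro r hr
    rw [mem_graph_iff] at hr
    obtain ⟨y, h1, h2⟩ := hr
    have hψr : ψ r = A y + c • (y : H) := by rw [hψapp, ← h1, ← h2]
    have h3 := hge1 y
    have h4 := hge2 y
    rw [hgapp, ← hψr] at h3 h4
    have hcpos : (0:ℝ) < ‖c‖ := norm_pos_iff.mpr hc0
    constructor
    · rw [← h1, inv_mul_eq_div, le_div_iff₀ hcpos, mul_comm]
      exact h4
    · rw [← h2]; exact h3
  have hK : AntilipschitzWith (Real.toNNReal (max ‖c‖⁻¹ 1)) f := by
    apply AntilipschitzWith.of_le_mul_dist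
    intro p q
    have hmem : ((p : H × H) - (q : H × H)) ∈ A.graph := A.graph.sub_mem p.2 q.2
    obtain ⟨e1, e2⟩ := hψg _ hmem
    have hdpq : dist p q = max ‖((p : H × H) - (q : H × H)).1‖ ‖((p : H × H) - q).2‖ := by
      rw [Subtype.dist_eq, Prod.dist_eq, dist_eq_norm, dist_eq_norm]
      rfl
    have hdf : dist (f p) (f q) = ‖ψ ((p : H × H) - q)‖ := by
      rw [dist_eq_norm]
      show ‖ψ (p : H × H) - ψ (q : H × H)‖ = _
      rw [← _root_.map_sub ψ]
    rw [hdpq, hdf]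
    have hcoe : ((Real.toNNReal (max ‖c‖⁻¹ 1)) : ℝ) = max ‖c‖⁻¹ 1 := by
      rw [Real.coe_toNNReal]
      positivity
    rw [hcoe]
    have hn : (0:ℝ) ≤ ‖ψ ((p : H × H) - q)‖ := norm_nonneg _
    apply max_le
    · calc ‖((p : H × H) - q).1‖ ≤ ‖c‖⁻¹ * ‖ψ ((p : H × H) - q)‖ := e1
        _ ≤ max ‖c‖⁻¹ 1 * ‖ψ ((p : H × H) - q)‖ := by
            apply mul_le_mul_of_nonneg_right (le_max_left _ _) hn
    · calc ‖((p : H × H) - q).2‖ ≤ ‖ψ ((p : H × H) - q)‖ := e2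
        _ ≤ max ‖c‖⁻¹ 1 * ‖ψ ((p : H × H) - q)‖ := by
            nth_rewrite 1 [← one_mul ‖ψ ((p : H × H) - q)‖]
            apply mul_le_mul_of_nonneg_right (le_max_right _ _) hn
  have hrange : Set.range f = (M : Set H) := by
    ext z
    constructor
    · rintro ⟨p, rfl⟩
      obtain ⟨y, h1, h2⟩ := (mem_graph_iff A (x := p.1)).mp p.2
      refine ⟨y, ?_⟩
      show g y = ψ (p : H × H)
      rw [hgapp, hψapp, ← h1, ← h2]
    · rintro ⟨x, rfl⟩
      exact ⟨⟨((x : H), A x), A.mem_graph x⟩, rfl⟩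
  have hMclosed : IsClosed (M : Set H) := by
    rw [← hrange]
    exact hK.isClosed_range huc
  -- orthogonal complement is trivial
  have horth : Mᗮ = ⊥ := by
    rw [Submodule.eq_bot_iff]
    intro y hy
    rw [Submodule.mem_orthogonal] at hy
    have h1 : ∀ x : A.domain, ⟪A x + c • (x : H), y⟫ = 0 := by
      intro x
      exact hy _ ⟨x, rfl⟩
    have h2 : ∀ u : A.domain, ⟪(-(starRingEnd ℂ c)) • y, (u : H)⟫ = ⟪y, A u⟫ := by
      intro u
      have := h1 u
      rw [inner_add_left, inner_smul_left] at this
      have h3 : ⟪A u, y⟫ = -((starRingEnd ℂ) c * ⟪(u : H), y⟫) := by linear_combination this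
      rw [inner_smul_left, ← inner_conj_symm y (A u), h3]
      rw [← inner_conj_symm (u : H) y]
      simp [mul_comm]
    have hgm : (y, (-(starRingEnd ℂ c)) • y) ∈ A.graph :=
      mem_of_forall_inner hdense hA h2
    obtain ⟨x, hx1, hx2⟩ := (mem_graph_iff A (x := _)).mp hgm
    have hAx : A x = c • y := by
      rw [hx2]
      show -(starRingEnd ℂ) c • y = c • y
      rw [conj_eq_neg hc, neg_neg]
    have hxy : (x : H) = y := hx1
    have hre := hsymm x x
    rw [hAx, hxy, inner_smul_left, inner_smul_right] at hre
    have hcc : (starRingEnd ℂ) c = -c := conj_eq_neg hc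
    rw [hcc] at hre
    have : (2 * c) * ⟪y, y⟫ = 0 := by linear_combination -hre
    rcases mul_eq_zero.mp this with h | h
    · exact absurd h (by simpa using hc0)
    · exact inner_self_eq_zero.mp h
  have : CompleteSpace M := hMclosed.completeSpace_coe
  have hMtop : M = ⊤ := Submodule.orthogonal_eq_bot_iff.mp horth
  have hw : w ∈ M := hMtop ▸ Submodule.mem_top
  obtain ⟨x, hx⟩ := hw
  exact ⟨x, by rw [← hgapp, hx]⟩

end KRaux

namespace KRaux
open LinearPMap
variable {H : Type*} [NormedAddCommGroup H] [InnerProductSpace ℂ H] [CompleteSpace H]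

lemma selfadjoint_of_symm_surj {T : H →ₗ.[ℂ] H} (hdense : Dense (T.domain : Set H))
    (hsymm : ∀ x y : T.domain, ⟪T x, (y : H)⟫ = ⟪(x : H), T y⟫)
    {c : ℂ} (hc : c.re = 0) (hc0 : c ≠ 0)
    (hs1 : ∀ w : H, ∃ x : T.domain, T x + c • (x : H) = w)
    (hs2 : ∀ w : H, ∃ x : T.domain, T x + (-c) • (x : H) = w) :
    T† = T := by
  have hle : T ≤ T† := IsFormalAdjoint.le_adjoint hdense hsymm
  have hfa : T†.IsFormalAdjoint T := adjoint_isFormalAdjoint hdense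
  -- domain inclusion D(T†) ⊆ D(T)
  have hdomle : T†.domain ≤ T.domain := by
    intro y hy
    set yd : T†.domain := ⟨y, hy⟩ with hyd
    obtain ⟨x, hx⟩ := hs1 (T† yd + c • y)
    set xd : T†.domain := ⟨(x : H), hle.1 x.2⟩ with hxd
    set u : T†.domain := yd - xd with hu
    have hux : (u : H) = y - (x : H) := rfl
    have hTu : T† u = T† yd - T x := by
      rw [hu, LinearPMap.map_sub]
      congr 1
      exact (hle.2 (x := x) (y := xd) rfl).symm
    have hu0 : T† u + c • (u : H) = 0 := by
      rw [hTu, hux, smul_sub]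
      linear_combination (norm := module) -hx
    have huzero : (u : H) = 0 := by
      have hinner : ∀ z : H, ⟪(u : H), z⟫ = 0 := by
        intro z
        obtain ⟨v, hv⟩ := hs2 z
        rw [← hv, inner_add_right, inner_smul_right]
        have h1 : ⟪T† u, (v : H)⟫ = ⟪(u : H), T v⟫ := hfa u v
        have h2 : T† u = -(c • (u : H)) := by
          have := hu0
          linear_combination (norm := module) this
        rw [h2] at h1
        rw [inner_neg_left, inner_smul_left, conj_eq_neg hc] at h1
        have h3 : ⟪(u : H), T v⟫ = c * ⟪(u : H), (v : H)⟫ := by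
          rw [← h1]; ring
        rw [h3]
        ring
      have := hinner (u : H)
      exact inner_self_eq_zero.mp this
    have : y = (x : H) := by
      have := hux
      rw [huzero] at this
      linear_combination (norm := module) -this
    rw [this]
    exact x.2
  have hdomeq : T†.domain = T.domain := le_antisymm hdomle hle.1
  refine eq_of_le_of_domain_eq ⟨hdomle, ?_⟩ hdomeq
  intro x y hxy
  exact (hle.2 (x := y) (y := x) hxy.symm).symm

end KRaux

open KRaux LinearPMap

set_option maxHeartbeats 2000000

/-- Kato–Rellich: if `A` is self-adjoint, `B` is symmetric with `D(A) ⊆ D(B)` and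
`‖Bx‖ ≤ a‖Ax‖ + b‖x‖` on `D(A)` with `a < 1`, then `A + B` with domain `D(A)`
is self-adjoint. -/
theorem katoRellich
    {H : Type*} [NormedAddCommGroup H] [InnerProductSpace ℂ H] [CompleteSpace H]
    (A B : H →ₗ.[ℂ] H) (hdom : A.domain ≤ B.domain)
    (hdense : Dense (A.domain : Set H))
    (hA : IsSelfAdjoint A)
    (hBsymm : ∀ x y : B.domain, ⟪B x, (y : H)⟫ = ⟪(x : H), B y⟫)
    (a b : ℝ) (ha : a < 1)
    (hbound : ∀ x : A.domain, ‖B ⟨(x : H), hdom x.2⟩‖ ≤ a * ‖A x‖ + b * ‖(x : H)‖) :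
    IsSelfAdjoint (katoSum A B hdom) := by
  have hAadj : A† = A := hA
  have hAsymm : ∀ x y : A.domain, ⟪A x, (y : H)⟫ = ⟪(x : H), A y⟫ := by
    have h := adjoint_isFormalAdjoint hdense (T := A)
    rw [hAadj] at h
    exact h
  set S : H →ₗ.[ℂ] H := katoSum A B hdom with hS
  have hSapp : ∀ x : A.domain, S x = A x + B ⟨(x : H), hdom x.2⟩ := fun x => rfl
  have hSsymm : ∀ x y : S.domain, ⟪S x, (y : H)⟫ = ⟪(x : H), S y⟫ := by
    intro x y
    rw [hSapp x, hSapp y, inner_add_left, inner_add_right, hAsymm x y,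
      hBsymm ⟨(x : H), hdom x.2⟩ ⟨(y : H), hdom y.2⟩]
  -- constants
  set a' : ℝ := max a 0 with ha'def
  set b' : ℝ := max b 0 with hb'def
  have ha' : a' < 1 := max_lt ha one_pos
  have ha'0 : 0 ≤ a' := le_max_right a 0
  have hb'0 : 0 ≤ b' := le_max_right b 0
  set μ : ℝ := (b' + 1) / (1 - a') with hμdef
  have hμ : 0 < μ := by
    apply div_pos <;> linarith
  set k : ℝ := a' + b' / μ with hkdef
  have hk0 : 0 ≤ k := by positivity
  have hk : k < 1 := by
    have hμ1 : (1 - a') * μ = b' + 1 := by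
      rw [hμdef, mul_comm, div_mul_cancel₀ _ (by exact ne_of_gt (by linarith) : (1:ℝ) - a' ≠ 0)]
    have h2 : b' / μ < 1 - a' := by
      rw [div_lt_iff₀ hμ]
      nlinarith
    rw [hkdef]
    linarith
  -- key surjectivity
  have key : ∀ c : ℂ, c.re = 0 → ‖c‖ = μ →
      ∀ w : H, ∃ x : A.domain, S x + c • (x : H) = w := by
    intro c hc hcμ w
    have hc0 : c ≠ 0 := by
      intro h
      rw [h, norm_zero] at hcμ
      exact absurd hcμ.symm (ne_of_gt hμ)
    set gc : A.domain →ₗ[ℂ] H := A.toFun + c • A.domain.subtype with hgc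
    have hgapp : ∀ x : A.domain, gc x = A x + c • (x : H) := fun x => rfl
    have hsq : ∀ x : A.domain, ‖gc x‖ ^ 2 = ‖A x‖ ^ 2 + ‖c‖ ^ 2 * ‖(x : H)‖ ^ 2 := by
      intro x
      rw [hgapp]
      exact norm_sq_shift hAsymm hc x
    have hge1 : ∀ x : A.domain, ‖A x‖ ≤ ‖gc x‖ := by
      intro x
      nlinarith [hsq x, norm_nonneg (gc x), norm_nonneg (A x), norm_nonneg (x : H),
        sq_nonneg (‖c‖ * ‖(x : H)‖), mul_pow ‖c‖ ‖(x : H)‖ 2]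
    have hge2 : ∀ x : A.domain, μ * ‖(x : H)‖ ≤ ‖gc x‖ := by
      intro x
      rw [← hcμ]
      nlinarith [hsq x, norm_nonneg (gc x), norm_nonneg (A x), norm_nonneg (x : H),
        norm_nonneg c, mul_nonneg (norm_nonneg c) (norm_nonneg (x : H)),
        mul_pow ‖c‖ ‖(x : H)‖ 2]
    have hginj : Function.Injective gc := by
      rw [← LinearMap.ker_eq_bot, Submodule.eq_bot_iff]
      intro x hx
      rw [LinearMap.mem_ker] at hx
      have := hge2 x
      rw [hx, norm_zero] at this
      have hx0 : ‖(x : H)‖ = 0 := by nlinarith [norm_nonneg (x : H)]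
      have : (x : H) = 0 := norm_eq_zero.mp hx0
      exact Subtype.coe_injective (by simpa using this)
    have hgsurj : Function.Surjective gc := by
      intro w'
      obtain ⟨x, hx⟩ := surj_shift hdense hAadj hc hc0 w'
      exact ⟨x, by rw [hgapp, hx]⟩
    set e : A.domain ≃ₗ[ℂ] H := LinearEquiv.ofBijective gc ⟨hginj, hgsurj⟩ with he
    have heapp : ∀ x : A.domain, e x = gc x := fun x => rfl
    set C : H →ₗ[ℂ] H :=
      B.toFun ∘ₗ (Submodule.inclusion hdom) ∘ₗ e.symm.toLinearMap with hC
    have hCapp : ∀ y : H,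
        C y = B ⟨((e.symm y : A.domain) : H), hdom (e.symm y).2⟩ := fun y => rfl
    have hCb : ∀ y : H, ‖C y‖ ≤ k * ‖y‖ := by
      intro y
      set x : A.domain := e.symm y with hx
      have hgx : gc x = y := by
        rw [← heapp]
        exact e.apply_symm_apply y
      have h1 : ‖C y‖ ≤ a * ‖A x‖ + b * ‖(x : H)‖ := by
        rw [hCapp]
        exact hbound x
      have h2 : a * ‖A x‖ + b * ‖(x : H)‖ ≤ a' * ‖A x‖ + b' * ‖(x : H)‖ := by
        have t1 : a * ‖A x‖ ≤ a' * ‖A x‖ :=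
          mul_le_mul_of_nonneg_right (le_max_left a 0) (norm_nonneg _)
        have t2 : b * ‖(x : H)‖ ≤ b' * ‖(x : H)‖ :=
          mul_le_mul_of_nonneg_right (le_max_left b 0) (norm_nonneg _)
        linarith
      have h3 : ‖A x‖ ≤ ‖y‖ := by
        have := hge1 x
        rwa [hgx] at this
      have h4 : ‖(x : H)‖ ≤ ‖y‖ / μ := by
        have := hge2 x
        rw [hgx] at this
        rw [le_div_iff₀ hμ]
        linarith [this]
      have h5 : a' * ‖A x‖ + b' * ‖(x : H)‖ ≤ a' * ‖y‖ + b' * (‖y‖ / μ) := by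
        have := mul_le_mul_of_nonneg_left h3 ha'0
        have := mul_le_mul_of_nonneg_left h4 hb'0
        linarith
      have h6 : a' * ‖y‖ + b' * (‖y‖ / μ) = k * ‖y‖ := by
        rw [hkdef]
        field_simp
      exact h1.trans (h2.trans (h5.trans_eq h6))
    set Ccont : H →L[ℂ] H := C.mkContinuous k hCb with hCcont
    have hCceq : ∀ y, Ccont y = C y := fun y => rfl
    have hnorm : ‖Ccont‖ ≤ k := LinearMap.mkContinuous_norm_le C hk0 hCb
    have hlt : ‖-Ccont‖ < 1 := by
      rw [norm_neg]
      exact lt_of_le_of_lt hnorm hk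
    set u : (H →L[ℂ] H)ˣ := Units.oneSub (-Ccont) hlt with hu
    set y : H := (↑u⁻¹ : H →L[ℂ] H) w with hy
    have h1 : (u : H →L[ℂ] H) y = w := by
      rw [hy]
      calc (u : H →L[ℂ] H) ((↑u⁻¹ : H →L[ℂ] H) w)
          = ((u : H →L[ℂ] H) * (↑u⁻¹ : H →L[ℂ] H)) w := rfl
        _ = (1 : H →L[ℂ] H) w := by rw [u.mul_inv]
        _ = w := rfl
    have h2 : y + Ccont y = w := by
      rw [← h1]
      show _ = (1 - -Ccont) y
      rw [ContinuousLinearMap.sub_apply, ContinuousLinearMap.neg_apply,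
        ContinuousLinearMap.one_apply, sub_neg_eq_add]
    refine ⟨e.symm y, ?_⟩
    have h3 : S (e.symm y) + c • ((e.symm y : A.domain) : H)
        = gc (e.symm y) + C y := by
      rw [hSapp, hgapp, hCapp]
      abel
    rw [h3]
    have h4 : gc (e.symm y) = y := by
      rw [← heapp]
      exact e.apply_symm_apply y
    rw [h4, ← hCceq, h2]
  -- assemble
  rw [LinearPMap.isSelfAdjoint_def]
  have hμI : ((μ : ℂ) * Complex.I).re = 0 := by simp
  have hμInorm : ‖(μ : ℂ) * Complex.I‖ = μ := by
    rw [norm_mul, Complex.norm_I, Complex.norm_real, mul_one]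
    exact abs_of_pos hμ
  have hμI0 : (μ : ℂ) * Complex.I ≠ 0 := by
    intro h
    rw [h, norm_zero] at hμInorm
    exact absurd hμInorm.symm (ne_of_gt hμ)
  exact selfadjoint_of_symm_surj hdense hSsymm hμI hμI0
    (key _ hμI hμInorm)
    (key _ (by simp [hμI]) (by rw [norm_neg]; exact hμInorm))
end

section
/- For s > 0 and m > 0, the integral ∫₀^∞ p^{-1/2} e^{-s(p + m²/p)} dp equals √(π/s) · e^{-2ms}. -/
open MeasureTheory Set Real

section Aux

variable {a c : ℝ}

private lemma hasDerivF (hx : (0:ℝ) < c) {x : ℝ} (hxx : x ∈ Ioi (0:ℝ)) :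
    HasDerivWithinAt (fun u : ℝ => u - c / u) (1 + c / x ^ 2) (Ioi 0) x := by
  have hx0 : x ≠ 0 := (mem_Ioi.mp hxx).ne'
  have h1 : HasDerivAt (fun u : ℝ => u - c / u) (1 - c * (-(x ^ 2)⁻¹)) x := by
    simpa [div_eq_mul_inv, Pi.sub_def] using
      (hasDerivAt_id x).sub (((hasDerivAt_inv hx0).const_mul c))
  have : (1 : ℝ) - c * (-(x ^ 2)⁻¹) = 1 + c / x ^ 2 := by field_simp; ring
  exact (this ▸ h1).hasDerivWithinAt

private lemma injF (hc : (0:ℝ) < c) : InjOn (fun u : ℝ => u - c / u) (Ioi 0) := by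
  have : StrictMonoOn (fun u : ℝ => u - c / u) (Ioi 0) := by
    intro x hx y hy hxy
    have h2 : c / y < c / x := div_lt_div_of_pos_left hc (mem_Ioi.mp hx) hxy
    simpa using sub_lt_sub hxy h2
  exact this.injOn

private lemma imgF (hc : (0:ℝ) < c) : (fun u : ℝ => u - c / u) '' Ioi 0 = univ := by
  apply Set.eq_univ_of_forall
  intro v
  set r := Real.sqrt (v ^ 2 + 4 * c) with hr_def
  have hr2 : r ^ 2 = v ^ 2 + 4 * c := Real.sq_sqrt (by nlinarith [sq_nonneg v])
  have hrv : -v < r := by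
    rcases le_or_gt 0 v with h | h
    · have : 0 < r := Real.sqrt_pos.mpr (by nlinarith [sq_nonneg v])
      linarith
    · have : -v < r := by
        rw [hr_def]
        have := Real.lt_sqrt (x := -v) (y := v ^ 2 + 4 * c) (by linarith)
        rw [this]; nlinarith
      exact this
  set u := (v + r) / 2 with hu_def
  have hu : 0 < u := by rw [hu_def]; linarith
  refine ⟨u, mem_Ioi.mpr hu, ?_⟩
  have hne : u ≠ 0 := hu.ne'
  field_simp
  rw [hu_def]
  linear_combination hr2 / 4

private lemma invImg (hc : (0:ℝ) < c) : (fun u : ℝ => c / u) '' Ioi 0 = Ioi 0 := by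
  ext x
  constructor
  · rintro ⟨y, hy, rfl⟩
    exact div_pos hc hy
  · intro hx
    exact ⟨c / x, div_pos hc hx, by field_simp⟩

/-- Glasser-type integral: `∫₀^∞ e^{-a (u - c/u)²} du = √(π/a)/2`. -/
private lemma glasser (ha : 0 < a) (hc : 0 < c) :
    ∫ u in Ioi (0:ℝ), Real.exp (-a * (u - c / u) ^ 2) = Real.sqrt (Real.pi / a) / 2 := by
  set F : ℝ → ℝ := fun u => u - c / u with hF
  set G : ℝ → ℝ := fun u => Real.exp (-a * (u - c / u) ^ 2) with hG
  have mG : Measurable G := by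
    have h : Measurable fun u : ℝ => u - c / u := by
      simpa [div_eq_mul_inv, Pi.sub_def] using measurable_id.sub (measurable_inv.const_mul c)
    exact Real.measurable_exp.comp ((h.pow_const 2).const_mul (-a))
  have hGmeas : ∀ t : Set ℝ, AEStronglyMeasurable G (volume.restrict t) := fun t =>
    mG.aestronglyMeasurable
  -- change of variable v = u - c/u
  have hchange := integral_image_eq_integral_abs_deriv_smul (f' := fun x => 1 + c / x ^ 2)
      measurableSet_Ioi (fun x hx => hasDerivF hc hx) (injF hc)
      (fun v => Real.exp (-a * v ^ 2))
  rw [imgF hc] at hchange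
  have hgauss : ∫ v, Real.exp (-a * v ^ 2) = Real.sqrt (Real.pi / a) :=
    integral_gaussian a
  rw [Measure.restrict_univ] at hchange
  -- the big integrand is integrable
  have hbigInt : IntegrableOn (fun x => |1 + c / x ^ 2| • Real.exp (-a * (F x) ^ 2))
      (Ioi 0) := by
    have := (integrableOn_image_iff_integrableOn_abs_deriv_smul (f' := fun x => 1 + c / x ^ 2)
      measurableSet_Ioi (fun x hx => hasDerivF hc hx) (injF hc)
      (fun v => Real.exp (-a * v ^ 2))).mp
    rw [imgF hc] at this
    exact this ((integrable_exp_neg_mul_sq ha).integrableOn)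
  have hposfac : ∀ x ∈ Ioi (0:ℝ), (0:ℝ) < 1 + c / x ^ 2 := by
    intro x hx
    have : 0 < c / x ^ 2 := div_pos hc (pow_pos (mem_Ioi.mp hx) 2)
    linarith
  -- integrability of G on Ioi 0
  have hGInt : IntegrableOn G (Ioi 0) := by
    refine Integrable.mono hbigInt (hGmeas _) ?_
    filter_upwards [ae_restrict_mem measurableSet_Ioi] with x hx
    have h1 := hposfac x hx
    have h2 : (0:ℝ) < Real.exp (-a * (F x) ^ 2) := Real.exp_pos _
    rw [Real.norm_eq_abs, Real.norm_eq_abs, smul_eq_mul]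
    rw [abs_of_pos h2, abs_mul, abs_abs, abs_of_pos h1, abs_of_pos h2]
    have hge : (1:ℝ) ≤ 1 + c / x ^ 2 := by
      have : 0 < c / x ^ 2 := div_pos hc (pow_pos (mem_Ioi.mp hx) 2)
      linarith
    calc Real.exp (-a * (x - c / x) ^ 2) = 1 * Real.exp (-a * (F x) ^ 2) := by
          rw [one_mul]
      _ ≤ (1 + c / x ^ 2) * Real.exp (-a * (F x) ^ 2) := by
          exact mul_le_mul_of_nonneg_right hge h2.le
  -- integrability of (c/x²) * G on Ioi 0
  have hG2Int : IntegrableOn (fun x => (c / x ^ 2) * G x) (Ioi 0) := by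
    have mG2 : Measurable fun x : ℝ => (c / x ^ 2) * G x := by
      have h : Measurable fun x : ℝ => c / x ^ 2 := by
        simpa [div_eq_mul_inv] using ((measurable_id.pow_const 2).inv.const_mul c)
      exact h.mul mG
    refine Integrable.mono hbigInt mG2.aestronglyMeasurable ?_
    filter_upwards [ae_restrict_mem measurableSet_Ioi] with x hx
    have h1 := hposfac x hx
    have h2 : (0:ℝ) < Real.exp (-a * (F x) ^ 2) := Real.exp_pos _
    have h3 : (0:ℝ) < c / x ^ 2 := div_pos hc (pow_pos (mem_Ioi.mp hx) 2)
    rw [Real.norm_eq_abs, Real.norm_eq_abs, smul_eq_mul]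
    rw [abs_mul, abs_of_pos h3, abs_of_pos h2, abs_mul, abs_abs, abs_of_pos h1, abs_of_pos h2]
    exact mul_le_mul_of_nonneg_right (by linarith) h2.le
  -- split the big integral
  have hsplit : ∫ x in Ioi (0:ℝ), |1 + c / x ^ 2| • Real.exp (-a * (F x) ^ 2)
      = (∫ x in Ioi (0:ℝ), G x) + ∫ x in Ioi (0:ℝ), (c / x ^ 2) * G x := by
    rw [← integral_add hGInt hG2Int]
    apply setIntegral_congr_fun measurableSet_Ioi
    intro x hx
    have h1 := hposfac x hx
    simp only [smul_eq_mul, hG, hF]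
    rw [abs_of_pos h1]
    ring
  -- second substitution: u ↦ c/u shows the two pieces are equal
  have hswap : ∫ x in Ioi (0:ℝ), (c / x ^ 2) * G x = ∫ x in Ioi (0:ℝ), G x := by
    have hder : ∀ x ∈ Ioi (0:ℝ),
        HasDerivWithinAt (fun u : ℝ => c / u) (-(c / x ^ 2)) (Ioi 0) x := by
      intro x hx
      have hx0 : x ≠ 0 := (mem_Ioi.mp hx).ne'
      have h1 : HasDerivAt (fun u : ℝ => c / u) (c * (-(x ^ 2)⁻¹)) x := by
        simpa [div_eq_mul_inv] using (hasDerivAt_inv hx0).const_mul c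
      have : c * (-(x ^ 2)⁻¹) = -(c / x ^ 2) := by field_simp
      exact (this ▸ h1).hasDerivWithinAt
    have hinj : InjOn (fun u : ℝ => c / u) (Ioi 0) := by
      intro x hx y hy hxy
      have hx0 : x ≠ 0 := (mem_Ioi.mp hx).ne'
      have hy0 : y ≠ 0 := (mem_Ioi.mp hy).ne'
      field_simp at hxy
      exact hxy.symm
    have := integral_image_eq_integral_abs_deriv_smul (f' := fun x => -(c / x ^ 2))
        measurableSet_Ioi hder hinj G
    rw [invImg hc] at this
    rw [this]
    apply setIntegral_congr_fun measurableSet_Ioi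
    intro x hx
    have hx0 : x ≠ 0 := (mem_Ioi.mp hx).ne'
    have h3 : (0:ℝ) < c / x ^ 2 := div_pos hc (pow_pos (mem_Ioi.mp hx) 2)
    simp only [smul_eq_mul, hG]
    rw [abs_neg, abs_of_pos h3]
    congr 2
    have hcc : c / (c / x) = x := by field_simp
    rw [hcc]
    ring
  rw [hchange, hsplit, hswap] at hgauss
  simp only [hG] at hgauss ⊢
  linarith

end Aux

/-- For `s > 0` and `m > 0`:
`∫₀^∞ p^{-1/2} e^{-s(p + m²/p)} dp = √(π/s) e^{-2ms}`. -/
theorem integral_rpow_neg_half_exp (s m : ℝ) (hs : 0 < s) (hm : 0 < m) :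
    ∫ p in Set.Ioi (0 : ℝ), p ^ (-(1 : ℝ) / 2) * Real.exp (-s * (p + m ^ 2 / p))
      = Real.sqrt (Real.pi / s) * Real.exp (-2 * m * s) := by
  have key := MeasureTheory.integral_comp_rpow_Ioi
    (fun p => p ^ (-(1:ℝ)/2) * Real.exp (-s * (p + m ^ 2 / p))) (two_ne_zero (α := ℝ))
  rw [← key]
  have h1 : ∫ x in Ioi (0:ℝ), (|(2:ℝ)| * x ^ ((2:ℝ)-1)) •
        ((fun p => p ^ (-(1:ℝ)/2) * Real.exp (-s * (p + m ^ 2 / p))) (x ^ (2:ℝ)))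
      = ∫ x in Ioi (0:ℝ), (2 * Real.exp (-2 * m * s)) * Real.exp (-s * (x - m / x) ^ 2) := by
    apply setIntegral_congr_fun measurableSet_Ioi
    intro x hx
    have hx0 : (0:ℝ) < x := hx
    have hxne : x ≠ 0 := hx0.ne'
    simp only [smul_eq_mul]
    rw [show ((2:ℝ) - 1) = 1 by norm_num, Real.rpow_one, abs_two]
    have h2 : (x ^ (2:ℝ)) ^ (-(1:ℝ)/2) = x⁻¹ := by
      rw [← Real.rpow_mul hx0.le]
      norm_num [Real.rpow_neg_one]
    have h3 : x ^ (2:ℝ) = x ^ 2 := by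
      rw [show (2:ℝ) = ((2:ℕ):ℝ) by norm_num, Real.rpow_natCast]
    rw [h2, h3]
    have hexp : -s * (x ^ 2 + m ^ 2 / x ^ 2) = -s * (x - m / x) ^ 2 + (-2 * m * s) := by
      field_simp
      ring
    rw [hexp, Real.exp_add]
    field_simp
  rw [h1, integral_const_mul, glasser hs hm]
  ring
end
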